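/- arXiv:quant-ph/0210078 — 2 statements merged into one kernel-verified Lean document; each statement's English description precedes it below -/
import Mathlib

section
/- For the Bloch equations with controller (u_x, u_y, u_z): the fixed point (x, y, z) of ṙ = (A+B)r + c, where A is the skew-symmetric matrix with entries A₁₂ = −u_z, A₁₃ = u_y, A₂₃ = −u_x, B = diag(−γ₂, −γ₂, −γ₁), c = (0,0,γ₁), satisfies the ellipsoid equation (z − 1/2)² + (γ₂/γ₁)(x² + y²) = 1/4, provided u_z = 0. -/
/-! Since the rotation generator `A` is skew-symmetric, `r ⬝ᵥ A r = 0`; dotting the fixed-point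
equation `(A + B) r + c = 0` with `r` therefore leaves `r ⬝ᵥ (B r + c) = 0`, which for
`B = diag(-γ₂, -γ₂, -γ₁)` and `c = (0, 0, γ₁)` is `γ₂ (x² + y²) + γ₁ z² = γ₁ z`, the ellipsoid. -/

open Matrix

theorem Matrix.dotProduct_mulVec_self_eq_zero_of_transpose_eq_neg {n R : Type*} [Fintype n]
    [CommRing R] [IsAddTorsionFree R] {A : Matrix n n R} (hA : Aᵀ = -A) (r : n → R) :
    r ⬝ᵥ A *ᵥ r = 0 := by
  rw [← self_eq_neg]
  calc r ⬝ᵥ A *ᵥ r = Aᵀ *ᵥ r ⬝ᵥ r := by rw [dotProduct_mulVec, ← mulVec_transpose]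
    _ = -(r ⬝ᵥ A *ᵥ r) := by rw [hA, neg_mulVec, neg_dotProduct, dotProduct_comm]

theorem Matrix.dotProduct_eq_zero_of_add_mulVec_add_eq_zero {n R : Type*} [Fintype n]
    [CommRing R] [IsAddTorsionFree R] {A B : Matrix n n R} (hA : Aᵀ = -A) {r c : n → R}
    (hr : (A + B) *ᵥ r + c = 0) : r ⬝ᵥ (B *ᵥ r + c) = 0 := by
  have := congrArg (r ⬝ᵥ ·) hr
  simpa only [add_mulVec, add_assoc, dotProduct_add, dotProduct_zero,
    dotProduct_mulVec_self_eq_zero_of_transpose_eq_neg hA, zero_add] using this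

theorem bloch_fixed_point_on_ellipsoid_general (γ₁ γ₂ ux uy uz x y z : ℝ)
    (hγ₁ : 0 < γ₁)
    (h1 : -γ₂ * x + (-uz * y + uy * z) = 0)
    (h2 : -γ₂ * y + (uz * x - ux * z) = 0)
    (h3 : -γ₁ * z + (-uy * x + ux * y) + γ₁ = 0) :
    (z - 1 / 2) ^ 2 + (γ₂ / γ₁) * (x ^ 2 + y ^ 2) = 1 / 4 := by
  set A : Matrix (Fin 3) (Fin 3) ℝ := !![0, -uz, uy; uz, 0, -ux; -uy, ux, 0]
  have hA : Aᵀ = -A := by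
    ext i j; fin_cases i <;> fin_cases j <;> simp [A]
  have hfix : (A + diagonal ![-γ₂, -γ₂, -γ₁]) *ᵥ ![x, y, z] + ![0, 0, γ₁] = 0 := by
    ext i; fin_cases i <;> simp [A, mulVec, dotProduct, Fin.sum_univ_three] <;> linarith
  have hdissip : x * (-γ₂ * x) + y * (-γ₂ * y) + z * (-γ₁ * z + γ₁) = 0 := by
    simpa [dotProduct, Fin.sum_univ_three, mulVec_diagonal] using
      dotProduct_eq_zero_of_add_mulVec_add_eq_zero hA hfix
  field_simp
  linear_combination -16 * hdissip

theorem bloch_fixed_point_on_ellipsoid (γ₁ γ₂ ux uy uz x y z : ℝ)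
    (hγ₁ : 0 < γ₁) (hγ₂ : 0 < γ₂) (huz : uz = 0)
    (h1 : -γ₂ * x + (-uz * y + uy * z) = 0)
    (h2 : -γ₂ * y + (uz * x - ux * z) = 0)
    (h3 : -γ₁ * z + (-uy * x + ux * y) + γ₁ = 0) :
    (z - 1 / 2) ^ 2 + (γ₂ / γ₁) * (x ^ 2 + y ^ 2) = 1 / 4 :=
  bloch_fixed_point_on_ellipsoid_general γ₁ γ₂ ux uy uz x y z hγ₁ h1 h2 h3
end

section
/- The maximally mixed state (0,0,0) is a limit point of the ellipsoid {(x,y,z) : (z−1/2)² + (γ₂/γ₁)(x²+y²) = 1/4} but for fixed finite controls (u_x,u_y) with z ≠ 0 the fixed point never equals (0,0,0); as the control magnitude tends to infinity the fixed point approaches (0,0,0). -/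
/-!
Under the control `(u, 0, 0)` the Bloch equations have the fixed point
`(0, -γ₁ u / (γ₁ γ₂ + u²), γ₁ γ₂ / (γ₁ γ₂ + u²))`, which tends to the origin as `u → ∞`.
The origin itself is never a fixed point, since the `z`-equation there reads `γ₁ = 0`.
-/

open Filter Topology

def blochFixedPoints (γ₁ γ₂ : ℝ) : Set (ℝ × ℝ × ℝ) :=
  {p | ∃ ux uy uz : ℝ,
    -γ₂ * p.1 + (-uz * p.2.1 + uy * p.2.2) = 0 ∧
    -γ₂ * p.2.1 + (uz * p.1 - ux * p.2.2) = 0 ∧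
    -γ₁ * p.2.2 + (-uy * p.1 + ux * p.2.1) + γ₁ = 0}

noncomputable def xControlFixedPoint (γ₁ γ₂ u : ℝ) : ℝ × ℝ × ℝ :=
  (0, -γ₁ * u / (γ₁ * γ₂ + u ^ 2), γ₁ * γ₂ / (γ₁ * γ₂ + u ^ 2))

lemma xControlFixedPoint_mem_blochFixedPoints {γ₁ γ₂ u : ℝ}
    (hD : γ₁ * γ₂ + u ^ 2 ≠ 0) : xControlFixedPoint γ₁ γ₂ u ∈ blochFixedPoints γ₁ γ₂ := by
  refine ⟨u, 0, 0, ?_, ?_, ?_⟩ <;> simp only [xControlFixedPoint] <;> field_simp <;> ring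

lemma tendsto_xControlFixedPoint_atTop (γ₁ γ₂ : ℝ) :
    Tendsto (xControlFixedPoint γ₁ γ₂) atTop (𝓝 (0, 0, 0)) := by
  have hy : Tendsto (fun u : ℝ => -γ₁ * u / (γ₁ * γ₂ + u ^ 2)) atTop (𝓝 0) := by
    have hD : Tendsto (fun u : ℝ => u + γ₁ * γ₂ / u) atTop atTop :=
      tendsto_id.atTop_add (tendsto_const_nhds.div_atTop tendsto_id)
    refine ((tendsto_const_nhds (x := -γ₁)).div_atTop hD).congr' ?_
    filter_upwards [eventually_gt_atTop 0] with u hu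
    rw [← mul_div_mul_right (-γ₁) _ hu.ne', add_mul, div_mul_cancel₀ _ hu.ne']
    ring
  have hz : Tendsto (fun u : ℝ => γ₁ * γ₂ + u ^ 2) atTop atTop :=
    tendsto_atTop_add_const_left _ _ (tendsto_pow_atTop two_ne_zero)
  exact tendsto_const_nhds.prodMk_nhds
    (hy.prodMk_nhds (tendsto_const_nhds.div_atTop hz))

lemma zero_mem_closure_blochFixedPoints (γ₁ γ₂ : ℝ) :
    (0, 0, 0) ∈ closure (blochFixedPoints γ₁ γ₂) := by
  refine mem_closure_of_tendsto (tendsto_xControlFixedPoint_atTop γ₁ γ₂) ?_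
  have hD : ∀ᶠ u : ℝ in atTop, 0 < γ₁ * γ₂ + u ^ 2 :=
    (tendsto_atTop_add_const_left _ _ (tendsto_pow_atTop two_ne_zero)).eventually_gt_atTop 0
  exact hD.mono fun u hDu => xControlFixedPoint_mem_blochFixedPoints hDu.ne'

theorem maximally_mixed_limit_of_fixed_points_general (γ₁ γ₂ : ℝ)
    (hγ₁ : 0 < γ₁) :
    ((0, 0, 0) : ℝ × ℝ × ℝ) ∈ closure
      {p : ℝ × ℝ × ℝ | ∃ ux uy uz : ℝ,
        -γ₂ * p.1 + (-uz * p.2.1 + uy * p.2.2) = 0 ∧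
        -γ₂ * p.2.1 + (uz * p.1 - ux * p.2.2) = 0 ∧
        -γ₁ * p.2.2 + (-uy * p.1 + ux * p.2.1) + γ₁ = 0} ∧
    ¬ ∃ ux uy uz : ℝ,
        -γ₂ * (0 : ℝ) + (-uz * 0 + uy * 0) = 0 ∧
        -γ₂ * (0 : ℝ) + (uz * 0 - ux * 0) = 0 ∧
        -γ₁ * (0 : ℝ) + (-uy * 0 + ux * 0) + γ₁ = 0 := by
  refine ⟨zero_mem_closure_blochFixedPoints γ₁ γ₂, ?_⟩
  rintro ⟨_, _, _, -, -, hz⟩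
  simp only [mul_zero, add_zero, zero_add] at hz
  exact hγ₁.ne' hz

theorem maximally_mixed_limit_of_fixed_points (γ₁ γ₂ : ℝ)
    (hγ₁ : 0 < γ₁) (hγ₂ : 0 < γ₂) :
    ((0, 0, 0) : ℝ × ℝ × ℝ) ∈ closure
      {p : ℝ × ℝ × ℝ | ∃ ux uy uz : ℝ,
        -γ₂ * p.1 + (-uz * p.2.1 + uy * p.2.2) = 0 ∧
        -γ₂ * p.2.1 + (uz * p.1 - ux * p.2.2) = 0 ∧
        -γ₁ * p.2.2 + (-uy * p.1 + ux * p.2.1) + γ₁ = 0} ∧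
    ¬ ∃ ux uy uz : ℝ,
        -γ₂ * (0 : ℝ) + (-uz * 0 + uy * 0) = 0 ∧
        -γ₂ * (0 : ℝ) + (uz * 0 - ux * 0) = 0 ∧
        -γ₁ * (0 : ℝ) + (-uy * 0 + ux * 0) + γ₁ = 0 :=
  maximally_mixed_limit_of_fixed_points_general γ₁ γ₂ hγ₁
end
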